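/- (Lemma 4.2, first bullet, and monotonicity.) Let P ≥ 0 and define g₂ : ℝ → ℝ by g₂(B) = 1 − (1/2 + (1/2)·erf(√(B/2) − √(P/2)))². Then g₂ is monotonically decreasing on [0, ∞) (AntitoneOn g₂ (Set.Ici 0)), and there exists χ₁ > 0 such that g₂ is convex on [0, χ₁] (ConvexOn ℝ (Set.Icc 0 χ₁) g₂). -/

import Mathlib

open MeasureTheory ProbabilityTheory Real Set

noncomputable def erf (x : ℝ) : ℝ :=
  (2 / Real.sqrt Real.pi) * ∫ t in (0:ℝ)..x, Real.exp (-t^2)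

/-!
Write `c = √(P/2)`, `Q(s) = (1 + erf (s - c)) / 2` and `s = √(B/2)`, so that
`g₂ B = 1 - Q(s)²`. Since `Q` is positive and increasing, `g₂` is antitone. For `B > 0` the chain
rule gives `g₂' B = -F(s) / (2√π)` with `F(s) = Q(s) e^{-(s-c)²} / s`, so convexity near `0`
amounts to `F` decreasing near `0`. Now
`s² e^{(s-c)²} F'(s) = s e^{-(s-c)²}/√π - 2(s-c) s Q(s) - Q(s) ≤ s (1/√π + 2|c|) - Q(0)`,
which is negative as long as `s < Q(0) / (1/√π + 2|c|)`: the `1/s` singularity of `F` dominates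
because `Q(0) > 0`.
-/

open Filter Topology

lemma hasDerivAt_erf (x : ℝ) : HasDerivAt erf (2 / √π * exp (-x ^ 2)) x := by
  have hcont : Continuous fun t : ℝ => exp (-t ^ 2) := by fun_prop
  exact (intervalIntegral.integral_hasDerivAt_right (hcont.intervalIntegrable 0 x)
    (hcont.stronglyMeasurableAtFilter _ _) hcont.continuousAt).const_mul _

@[fun_prop]
lemma continuous_erf : Continuous erf :=
  continuous_iff_continuousAt.2 fun x => (hasDerivAt_erf x).continuousAt

lemma strictMono_erf : StrictMono erf :=
  strictMono_of_hasDerivAt_pos hasDerivAt_erf fun x => by positivity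

lemma tendsto_erf_atTop : Tendsto erf atTop (𝓝 1) := by
  have hI : ∫ t in Ioi 0, exp (-t ^ 2) = √π / 2 := by simpa using integral_gaussian_Ioi 1
  have h := intervalIntegral_tendsto_integral_Ioi 0
    (by simpa using (integrable_exp_neg_mul_sq one_pos).integrableOn) tendsto_id
  have hπ : 2 / √π * (√π / 2) = 1 := by field_simp
  rw [hI] at h
  have h' := h.const_mul (2 / √π)
  rwa [hπ] at h'

lemma erf_neg (x : ℝ) : erf (-x) = -erf x := by
  have h := intervalIntegral.integral_comp_neg (a := 0) (b := x) fun t : ℝ => exp (-t ^ 2)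
  simp only [neg_sq, neg_zero] at h
  rw [erf, erf, intervalIntegral.integral_symm, ← h]
  ring

lemma erf_lt_one (x : ℝ) : erf x < 1 :=
  (strictMono_erf (lt_add_one x)).trans_le
    (strictMono_erf.monotone.ge_of_tendsto tendsto_erf_atTop _)

lemma neg_one_lt_erf (x : ℝ) : -1 < erf x := by
  linarith [erf_neg x, erf_lt_one (-x)]

/-- The distribution function of the normal law with mean `c` and variance `1/2`. -/
noncomputable def erfCDF (c s : ℝ) : ℝ := 1/2 + 1/2 * erf (s - c)

section erfCDF

variable (c : ℝ)

lemma erfCDF_pos (s : ℝ) : 0 < erfCDF c s := by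
  unfold erfCDF
  linarith [neg_one_lt_erf (s - c)]

lemma erfCDF_lt_one (s : ℝ) : erfCDF c s < 1 := by
  unfold erfCDF
  linarith [erf_lt_one (s - c)]

lemma monotone_erfCDF : Monotone (erfCDF c) := fun a b hab => by
  have := strictMono_erf.monotone (sub_le_sub_right hab c)
  unfold erfCDF
  linarith

@[fun_prop]
lemma continuous_erfCDF : Continuous (erfCDF c) := by
  unfold erfCDF
  fun_prop

lemma hasDerivAt_erfCDF (s : ℝ) : HasDerivAt (erfCDF c) (exp (-(s - c) ^ 2) / √π) s := by
  have h := (((hasDerivAt_erf (s - c)).comp s ((hasDerivAt_id s).sub_const c)).const_mul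
    (1/2 : ℝ)).const_add (1/2 : ℝ)
  exact h.congr_deriv (by field_simp)

lemma hasDerivAt_erfCDF_mul_exp_div {s : ℝ} (hs : s ≠ 0) :
    HasDerivAt (fun s => erfCDF c s * exp (-(s - c) ^ 2) / s)
      (exp (-(s - c) ^ 2) *
        (exp (-(s - c) ^ 2) * s / √π - 2 * (s - c) * s * erfCDF c s - erfCDF c s) / s ^ 2) s := by
  have hE :
      HasDerivAt (fun s => exp (-(s - c) ^ 2)) (exp (-(s - c) ^ 2) * (-(2 * (s - c)))) s := by
    have := (((hasDerivAt_id s).sub_const c).pow 2).neg.exp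
    exact this.congr_deriv (by simp only [id, Pi.neg_apply, Pi.pow_apply]; ring)
  have h := ((hasDerivAt_erfCDF c s).mul hE).div (hasDerivAt_id s) hs
  exact h.congr_deriv (by simp only [id, Pi.mul_apply]; field_simp; ring)

lemma antitoneOn_erfCDF_mul_exp_div :
    AntitoneOn (fun s => erfCDF c s * exp (-(s - c) ^ 2) / s)
      (Ioc 0 (erfCDF c 0 / (1 / √π + 2 * |c|))) := by
  have hK : 0 < 1 / √π + 2 * |c| := by positivity
  refine antitoneOn_of_hasDerivWithinAt_nonpos (convex_Ioc _ _) ?_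
    (fun s hs => (hasDerivAt_erfCDF_mul_exp_div c (interior_subset hs).1.ne').hasDerivWithinAt) ?_
  · exact ((continuous_erfCDF c).mul (by fun_prop)).continuousOn.div continuousOn_id
      fun s hs => hs.1.ne'
  intro s hs
  rw [interior_Ioc] at hs
  obtain ⟨hs0, hsσ⟩ := hs
  set E := exp (-(s - c) ^ 2)
  set Q := erfCDF c s
  have hE1 : E ≤ 1 := exp_le_one_iff.2 (by nlinarith)
  have hQ0 : erfCDF c 0 ≤ Q := monotone_erfCDF c hs0.le
  have hQ1 : Q ≤ 1 := (erfCDF_lt_one c s).le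
  have hσ : s * (1 / √π + 2 * |c|) ≤ erfCDF c 0 := by
    rw [lt_div_iff₀ hK] at hsσ; exact hsσ.le
  have hfirst : E * s / √π ≤ s * (1 / √π) := by
    rw [mul_one_div]; gcongr; nlinarith
  have hsecond : -(2 * (s - c) * s * Q) ≤ s * (2 * |c|) := by
    have : c * Q ≤ |c| := by
      calc c * Q ≤ |c| * Q := mul_le_mul_of_nonneg_right (le_abs_self c) (erfCDF_pos c s).le
        _ ≤ |c| := mul_le_of_le_one_right (abs_nonneg c) hQ1
    nlinarith [erfCDF_pos c s, mul_pos hs0 hs0]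
  have hnum : E * s / √π - 2 * (s - c) * s * Q - Q ≤ 0 := by nlinarith
  exact div_nonpos_of_nonpos_of_nonneg (mul_nonpos_of_nonneg_of_nonpos (exp_pos _).le hnum)
    (sq_nonneg s)

lemma antitone_one_sub_erfCDF_sqrt_sq : Antitone fun B => 1 - erfCDF c √(B / 2) ^ 2 := by
  intro a b hab
  have := monotone_erfCDF c (sqrt_le_sqrt (div_le_div_of_nonneg_right hab zero_le_two))
  have := (erfCDF_pos c √(a / 2)).le
  dsimp only
  gcongr

lemma hasDerivAt_one_sub_erfCDF_sqrt_sq {B : ℝ} (hB : 0 < B) :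
    HasDerivAt (fun B => 1 - erfCDF c √(B / 2) ^ 2)
      (-(erfCDF c √(B / 2) * exp (-(√(B / 2) - c) ^ 2) / √(B / 2)) / (2 * √π)) B := by
  have hs : 0 < √(B / 2) := sqrt_pos.2 (by positivity)
  have hsqrt : HasDerivAt (fun B => √(B / 2)) (1 / (2 * √(B / 2)) * (1 / 2)) B :=
    (hasDerivAt_sqrt (by positivity : B / 2 ≠ 0)).comp B ((hasDerivAt_id B).div_const 2)
  have h := (((hasDerivAt_erfCDF c _).comp B hsqrt).pow 2).const_sub 1
  exact h.congr_deriv (by simp only [Function.comp_apply]; field_simp; ring)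

lemma convexOn_one_sub_erfCDF_sqrt_sq :
    ConvexOn ℝ (Icc 0 (2 * (erfCDF c 0 / (1 / √π + 2 * |c|)) ^ 2))
      fun B => 1 - erfCDF c √(B / 2) ^ 2 := by
  set σ := erfCDF c 0 / (1 / √π + 2 * |c|)
  have hσ : 0 < σ := by have := erfCDF_pos c 0; positivity
  have hderiv := fun B (hB : B ∈ Ioo 0 (2 * σ ^ 2)) =>
    hasDerivAt_one_sub_erfCDF_sqrt_sq c hB.1
  have hmem : ∀ B ∈ Ioo 0 (2 * σ ^ 2), √(B / 2) ∈ Ioc 0 σ := fun B hB =>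
    ⟨sqrt_pos.2 (by linarith [hB.1]), sqrt_le_iff.2 ⟨hσ.le, by linarith [hB.2]⟩⟩
  refine MonotoneOn.convexOn_of_deriv (convex_Icc _ _) ?_ ?_ ?_
  · exact (by fun_prop : Continuous fun B => 1 - erfCDF c √(B / 2) ^ 2).continuousOn
  · rw [interior_Icc]
    exact fun B hB => (hderiv B hB).differentiableAt.differentiableWithinAt
  · rw [interior_Icc]
    intro a ha b hb hab
    rw [(hderiv a ha).deriv, (hderiv b hb).deriv]
    have := antitoneOn_erfCDF_mul_exp_div c (hmem a ha) (hmem b hb)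
      (sqrt_le_sqrt (div_le_div_of_nonneg_right hab zero_le_two))
    gcongr

end erfCDF

theorem stmt_15_general (P : ℝ)
    (g₂ : ℝ → ℝ)
    (hg₂ : ∀ B, g₂ B = 1 - (1/2 + (1/2) * erf (Real.sqrt (B/2) - Real.sqrt (P/2)))^2) :
    AntitoneOn g₂ (Set.Ici 0) ∧
    ∃ χ₁ : ℝ, 0 < χ₁ ∧ ConvexOn ℝ (Set.Icc 0 χ₁) g₂ := by
  obtain rfl : g₂ = fun B => 1 - erfCDF √(P / 2) √(B / 2) ^ 2 := funext hg₂
  have hσ := erfCDF_pos √(P / 2) 0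
  exact ⟨(antitone_one_sub_erfCDF_sqrt_sq _).antitoneOn _, _, by positivity,
    convexOn_one_sub_erfCDF_sqrt_sq _⟩

theorem stmt_15 (P : ℝ) (hP : 0 ≤ P)
    (g₂ : ℝ → ℝ)
    (hg₂ : ∀ B, g₂ B = 1 - (1/2 + (1/2) * erf (Real.sqrt (B/2) - Real.sqrt (P/2)))^2) :
    AntitoneOn g₂ (Set.Ici 0) ∧
    ∃ χ₁ : ℝ, 0 < χ₁ ∧ ConvexOn ℝ (Set.Icc 0 χ₁) g₂ :=
  stmt_15_general P g₂ hg₂
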